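/- arXiv:2508.19503 — 4 statements merged into one kernel-verified Lean document; each statement's English description precedes it below -/
import Mathlib

section
/- Let g ≥ 1, r ≥ 1 be integers and set d = rg. Then an (r+1)-ary word of length g fails conditions (i)–(iii) for parameters (g,r,d) if and only if it is a nondecreasing word all of whose letters lie in {i,i+1} for some i ∈ {1,…,r}; the number of such words is (g−1)r + (r+1) = rg + 1, and consequently the number of (r+1)-ary words of length g satisfying conditions (i)–(iii) for parameters (g,r,rg) equals (r+1)^g − (rg + 1). -/
open scoped Classical

/-! ### Words and conditions (i)-(iii) -/

/-- An `(r+1)`-ary word of length `g`: every letter lies in `{1, …, r+1}`. -/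
def IsWord (g r : ℕ) (w : Fin g → ℕ) : Prop :=
  ∀ j, 1 ≤ w j ∧ w j ≤ r + 1

/-- Condition (i): a collection of at least `g + r - d` pairwise disjoint decreasing
subsequences, each of length `r + 1`. -/
def CondI (g r d : ℕ) (w : Fin g → ℕ) : Prop :=
  ∃ S : Fin (g + r - d) → Fin (r + 1) → Fin g,
    (∀ k, StrictMono (S k) ∧ StrictAnti (w ∘ S k)) ∧
      ∀ k k', k ≠ k' → ∀ a b, S k a ≠ S k' b

/-- Condition (ii): no nondecreasing subsequence of length greater than `d / r`. -/
def CondII (g r d : ℕ) (w : Fin g → ℕ) : Prop :=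
  ∀ m, d / r < m → ¬∃ js : Fin m → Fin g, StrictMono js ∧ Monotone (w ∘ js)

/-- Condition (iii): for every `i ∈ {1, …, r}`, no `(i,i+1)`-subsequence (nondecreasing,
all letters equal to `i` or `i+1`) of length `d / r`. -/
def CondIII (g r d : ℕ) (w : Fin g → ℕ) : Prop :=
  ∀ i, 1 ≤ i → i ≤ r →
    ¬∃ js : Fin (d / r) → Fin g,
        StrictMono js ∧ Monotone (w ∘ js) ∧ ∀ a, w (js a) = i ∨ w (js a) = i + 1

/-- A word satisfies conditions (i)–(iii) for parameters `(g, r, d)`. -/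
def SatisfiesConds (g r d : ℕ) (w : Fin g → ℕ) : Prop :=
  CondI g r d w ∧ CondII g r d w ∧ CondIII g r d w

/-- The number of `(r+1)`-ary words of length `g` satisfying conditions (i)–(iii). -/
noncomputable def wordCount (g r d : ℕ) : ℕ :=
  ((Fintype.piFinset fun _ : Fin g => Finset.Icc 1 (r + 1)).filter fun w =>
      SatisfiesConds g r d w).card

/-! ### Tableaux, encoded as functions `ℕ → ℕ → ℕ` (entry `0` = empty box) -/

/-- A semistandard Young tableau: support is a Young diagram (rows left-justified,
columns top-justified), rows weakly increase, columns strictly increase.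
Entries are positive; the value `0` marks an empty box. -/
def IsSSYT (T : ℕ → ℕ → ℕ) : Prop :=
  (∀ i j, T i (j + 1) ≠ 0 → T i j ≠ 0) ∧
  (∀ i j, T (i + 1) j ≠ 0 → T i j ≠ 0) ∧
  (∀ i j, T i (j + 1) ≠ 0 → T i j ≤ T i (j + 1)) ∧
  (∀ i j, T (i + 1) j ≠ 0 → T i j < T (i + 1) j)

/-- The number of boxes of a tableau. -/
noncomputable def tabSize (T : ℕ → ℕ → ℕ) : ℕ :=
  {p : ℕ × ℕ | T p.1 p.2 ≠ 0}.ncard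

/-- `T` has an `(i,i+1)`-strip of length `ℓ`: one box in each of the first `ℓ` columns
(`s j` = row of the box in column `j`), boxes weakly move up from left to right
(a box in a column strictly to the left never lies in a row strictly above a box in a
column to its right), every box is filled with `i` or `i+1`, and every entry `i` lies
in a column strictly to the left of every entry `i+1`. -/
def HasIStrip (T : ℕ → ℕ → ℕ) (i ℓ : ℕ) : Prop :=
  ∃ s : ℕ → ℕ,
    (∀ j, j < ℓ → T (s j) j ≠ 0) ∧
    (∀ j j', j < j' → j' < ℓ → s j' ≤ s j) ∧
    (∀ j, j < ℓ → T (s j) j = i ∨ T (s j) j = i + 1) ∧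
    (∀ j j', j < ℓ → j' < ℓ → T (s j) j = i → T (s j') j' = i + 1 → j < j')

/-- `SSYT_C(g,r,d)` (with `n = d + d/r + 1 - g`): SSYT of size `(d-r)(r+1) - rg`,
entries in `{1, …, r+1}`, width at most `n - r - 1`, at least `d - g - r` columns of
height `r + 1`, and no `(i,i+1)`-strip of length `n - r - 1` for any `i ∈ {1, …, r}`. -/
def SSYT_C (g r d n : ℕ) : Set (ℕ → ℕ → ℕ) :=
  {T | IsSSYT T ∧ tabSize T = (d - r) * (r + 1) - r * g ∧
    (∀ i j, T i j ≠ 0 → T i j ≤ r + 1) ∧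
    T 0 (n - r - 1) = 0 ∧
    (∀ j, j < d - g - r → T r j ≠ 0) ∧
    ∀ i, 1 ≤ i → i ≤ r → ¬HasIStrip T i (n - r - 1)}

/-- `SSYT_AC(g,r,d)`: SSYT of size `g`, entries in `{1, …, r+1}`, width at most `d / r`,
at least `g + r - d` columns of height `r + 1`, and no `(i,i+1)`-strip of length `d / r`
for any `i ∈ {1, …, r}`. -/
def SSYT_AC (g r d : ℕ) : Set (ℕ → ℕ → ℕ) :=
  {T | IsSSYT T ∧ tabSize T = g ∧
    (∀ i j, T i j ≠ 0 → T i j ≤ r + 1) ∧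
    T 0 (d / r) = 0 ∧
    (∀ j, j < g + r - d → T r j ≠ 0) ∧
    ∀ i, 1 ≤ i → i ≤ r → ¬HasIStrip T i (d / r)}

/-- The width adjustment `ψ`: if `d < g + r`, add `g + r - d` full columns of height
`r + 1` (filled with `1, …, r+1`) on the left; if `d > g + r`, remove the leftmost
`d - g - r` columns; if `d = g + r`, do nothing. -/
def psi (g r d : ℕ) (B : ℕ → ℕ → ℕ) : ℕ → ℕ → ℕ :=
  if d ≤ g + r then
    fun i j =>
      if j < g + r - d then (if i < r + 1 then i + 1 else 0) else B i (j - (g + r - d))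
  else fun i j => B i (j + (d - (g + r)))

/-- A `180°`-rotated and conjugated SSYT of content `(r, …, r)` (each of `1, …, g`
appearing exactly `r` times) and height at most `r + 1`.  The row index `i` runs over
`0, …, r` (row `i` is the row labelled `i + 1`) and the column index `j` counts boxes
of a row starting from the *right* end.  Rows are right-justified and strictly increase
from right to left; columns are bottom-justified and weakly decrease from top to bottom. -/
def IsTrSSYT (g r : ℕ) (R : ℕ → ℕ → ℕ) : Prop :=
  (∀ i j, R i (j + 1) ≠ 0 → R i j ≠ 0) ∧
  (∀ i j, i < r → R i j ≠ 0 → R (i + 1) j ≠ 0) ∧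
  (∀ i j, r + 1 ≤ i → R i j = 0) ∧
  (∀ i j, R i (j + 1) ≠ 0 → R i j < R i (j + 1)) ∧
  (∀ i j, R i j ≠ 0 → R (i + 1) j ≠ 0 → R (i + 1) j ≤ R i j) ∧
  (∀ i j, R i j ≠ 0 → R i j ≤ g) ∧
  (∀ k, 1 ≤ k → k ≤ g → {p : ℕ × ℕ | R p.1 p.2 = k}.ncard = r)

/-- The purple tableau `φ(R)`: for `i = 1, …, g` in order, place a box labelled `i` as
far to the left as possible in the unique row among `1, …, r+1` not containing `i` in
`R`.  Equivalently, the entry of `φ(R)` in row `i`, column `j` is the `(j+1)`-st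
smallest value of `{1, …, g}` not appearing in row `i` of `R`. -/
def phiMap (g r : ℕ) (R : ℕ → ℕ → ℕ) : ℕ → ℕ → ℕ := fun i j =>
  if i < r + 1 then
    (((Finset.Icc 1 g).filter fun k => ∀ l ∈ Finset.range g, R i l ≠ k).sort (· ≤ ·)).getD j 0
  else 0

/-- A standard Young tableau of size `g`: a semistandard tableau with strictly
increasing rows whose entries are exactly `1, …, g`, each appearing once. -/
def IsSYT (g : ℕ) (Q : ℕ → ℕ → ℕ) : Prop :=
  IsSSYT Q ∧ (∀ i j, Q i (j + 1) ≠ 0 → Q i j < Q i (j + 1)) ∧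
  (∀ i j, Q i j ≠ 0 → Q i j ≤ g) ∧
  (∀ k, 1 ≤ k → k ≤ g → {p : ℕ × ℕ | Q p.1 p.2 = k}.ncard = 1)

/-- Two tableaux have the same shape. -/
def SameShape (P Q : ℕ → ℕ → ℕ) : Prop :=
  ∀ i j, P i j ≠ 0 ↔ Q i j ≠ 0

/-- An L-tableau with parameters `(g, r, d)`, encoded as the pair of its blue tableau
`B` (in grid coordinates: row `i ∈ {0, …, r}` from the top, column `j ∈ {0, …, d-r-1}`
from the left) and its red tableau `R` (row `i ∈ {0, …, r}` from the top, column `j`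
counted from the right edge of the grid).  The blue entries lie in `{1, …, r+1}`, are
top- and left-justified and form an SSYT; the red entries lie in `{1, …, g}`, each
appearing exactly `r` times, are bottom- and right-justified and form a rotated,
conjugated SSYT; together they fill the `(r+1) × (d-r)` grid (the grid cell `(i, j)`
is blue if and only if it is not red, i.e. `R i (d - r - 1 - j) = 0`). -/
def IsLTableau (g r d : ℕ) (B R : ℕ → ℕ → ℕ) : Prop :=
  IsSSYT B ∧ (∀ i j, B i j ≠ 0 → B i j ≤ r + 1) ∧
  IsTrSSYT g r R ∧
  (∀ i j, d - r ≤ j → R i j = 0) ∧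
  (∀ i j, r + 1 ≤ i ∨ d - r ≤ j → B i j = 0) ∧
  (∀ i j, i < r + 1 → j < d - r → (B i j ≠ 0 ↔ R i (d - r - 1 - j) = 0))

/-- The set `𝓛ʳ_{g,n,d}` of L-tableaux: the blue tableau is supported in the leftmost
`n - r - 1` columns and has no `(i,i+1)`-strip of length `n - r - 1` for `i ∈ {1, …, r}`. -/
def LSet (g r d n : ℕ) : Set ((ℕ → ℕ → ℕ) × (ℕ → ℕ → ℕ)) :=
  {BR | IsLTableau g r d BR.1 BR.2 ∧
    (∀ i j, n - r - 1 ≤ j → BR.1 i j = 0) ∧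
    ∀ i, 1 ≤ i → i ≤ r → ¬HasIStrip BR.1 i (n - r - 1)}

/-- The set `𝒯ʳ_{g,n,d}` of pairs `(P, Q)` of the same shape with `P ∈ SSYT_AC(g,r,d)`
and `Q` a standard Young tableau. -/
def TSet (g r d : ℕ) : Set ((ℕ → ℕ → ℕ) × (ℕ → ℕ → ℕ)) :=
  {PQ | PQ.1 ∈ SSYT_AC g r d ∧ IsSYT g PQ.2 ∧ SameShape PQ.1 PQ.2}

/-! ### Words as lists, Knuth equivalence, reading words, RSK -/

/-- The list `s` is an `(i,i+1)`-subsequence of length `ℓ` of the word `w`: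
a nondecreasing subsequence all of whose letters equal `i` or `i + 1`. -/
def HasIISubseqL (w : List ℕ) (i ℓ : ℕ) : Prop :=
  ∃ s : List ℕ, s.Sublist w ∧ s.length = ℓ ∧ s.Pairwise (· ≤ ·) ∧ ∀ x ∈ s, x = i ∨ x = i + 1

/-- Elementary Knuth transformations: `…acb… ↦ …cab…` for `a ≤ b < c`, and
`…bac… ↦ …bca…` for `a < b ≤ c`. -/
inductive KnuthStep : List ℕ → List ℕ → Prop
  | swap1 (u v : List ℕ) (a b c : ℕ) (h1 : a ≤ b) (h2 : b < c) :
      KnuthStep (u ++ a :: c :: b :: v) (u ++ c :: a :: b :: v)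
  | swap2 (u v : List ℕ) (a b c : ℕ) (h1 : a < b) (h2 : b ≤ c) :
      KnuthStep (u ++ b :: a :: c :: v) (u ++ b :: c :: a :: v)

/-- Knuth equivalence: the equivalence relation generated by the elementary Knuth
transformations. -/
def KnuthEquiv : List ℕ → List ℕ → Prop :=
  Relation.EqvGen KnuthStep

/-- View a tableau given as a list of rows as a function `ℕ → ℕ → ℕ`. -/
def tabFun (P : List (List ℕ)) : ℕ → ℕ → ℕ := fun i j => (P.getD i []).getD j 0

/-- The reading word of a tableau: concatenate the rows from bottom to top,
each row read from left to right. -/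
def readingWord (P : List (List ℕ)) : List ℕ :=
  P.reverse.flatten

/-- A semistandard Young tableau presented as its list of rows (top to bottom):
rows are nonempty, weakly increasing, with positive entries; row lengths weakly
decrease; columns strictly increase. -/
def IsSSYTRows (P : List (List ℕ)) : Prop :=
  (∀ row ∈ P, row ≠ [] ∧ row.Pairwise (· ≤ ·) ∧ ∀ x ∈ row, 0 < x) ∧
  ∀ i, i + 1 < P.length →
    (P.getD (i + 1) []).length ≤ (P.getD i []).length ∧
    ∀ j, j < (P.getD (i + 1) []).length →
      (P.getD i []).getD j 0 < (P.getD (i + 1) []).getD j 0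

/-- Schensted insertion of `x` into a row: replace the leftmost entry strictly larger
than `x` (returning it as bumped), or append `x` at the end if no such entry exists. -/
def rowInsert (x : ℕ) : List ℕ → List ℕ × Option ℕ
  | [] => ([x], none)
  | y :: ys =>
    if y ≤ x then
      let p := rowInsert x ys
      (y :: p.1, p.2)
    else (x :: ys, some y)

/-- Schensted row insertion of `x` into a tableau (given as its list of rows). -/
def tabInsert (x : ℕ) : List (List ℕ) → List (List ℕ)
  | [] => [[x]]
  | row :: rest =>
    match rowInsert x row with
    | (row', none) => row' :: rest
    | (row', some y) => row' :: tabInsert y rest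

/-- The insertion tableau `P` of a word under the RSK correspondence. -/
def insertTab (w : List ℕ) : List (List ℕ) :=
  w.foldl (fun t x => tabInsert x t) []

/-- The recording tableau `Q` of a word under the RSK correspondence: the entry in box
`(i, j)` is the step at which that box was created during the insertion process. -/
def recQ (w : List ℕ) : ℕ → ℕ → ℕ := fun i j =>
  (((List.range (w.length + 1)).find? fun k =>
      decide (j < ((insertTab (w.take k)).getD i []).length)).getD 0)

/-- The RSK correspondence, sending a word to the pair (insertion tableau, recording
tableau), both viewed as functions `ℕ → ℕ → ℕ`. -/
def RSKmap (w : List ℕ) : (ℕ → ℕ → ℕ) × (ℕ → ℕ → ℕ) :=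
  (tabFun (insertTab w), recQ w)


/-! ### Auxiliary lemmas -/

/-- threshold lemma -/
theorem my_threshold (g : ℕ) (hg : 0 < g) (w : Fin g → ℕ) (v : ℕ) (hmono : Monotone w)
    (hval : ∀ j, w j = v ∨ w j = v + 1) (hv0 : w ⟨0, hg⟩ = v) :
    ∀ j : Fin g,
      w j = if (j : ℕ) < g - (Finset.univ.filter fun j => w j = v + 1).card then v else v + 1 := by
  classical
  set s := (Finset.univ.filter fun j => w j = v + 1).card with hs
  have hsle : s ≤ g - 1 := by
    have h0 : (⟨0, hg⟩ : Fin g) ∉ Finset.univ.filter fun j => w j = v + 1 := by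
      simp only [Finset.mem_filter, Finset.mem_univ, true_and, hv0]
      omega
    have hlt : s < g := by
      have hss : (Finset.univ.filter fun j => w j = v + 1) ⊂ Finset.univ :=
        (Finset.ssubset_iff_of_subset (Finset.filter_subset _ _)).mpr
          ⟨⟨0, hg⟩, Finset.mem_univ _, h0⟩
      have := Finset.card_lt_card hss
      simpa using this
    omega
  have key : ∀ j : Fin g, w j = v + 1 ↔ g ≤ (j : ℕ) + s := by
    intro j
    constructor
    · intro hj
      have hsub : Finset.Ici j ⊆ Finset.univ.filter fun j => w j = v + 1 := by
        intro x hx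
        simp only [Finset.mem_filter, Finset.mem_univ, true_and]
        have hjx := hmono (Finset.mem_Ici.mp hx)
        rcases hval x with h1 | h1
        · omega
        · exact h1
      have hcard := Finset.card_le_card hsub
      rw [Fin.card_Ici] at hcard
      have := j.isLt
      omega
    · intro hj
      by_contra hne
      have hwj : w j = v := (hval j).resolve_right hne
      have hsub : (Finset.univ.filter fun j => w j = v + 1) ⊆ Finset.Ioi j := by
        intro x hx
        simp only [Finset.mem_filter, Finset.mem_univ, true_and] at hx
        simp only [Finset.mem_Ioi]
        by_contra hxj
        push_neg at hxj
        have := hmono hxj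
        omega
      have hcard := Finset.card_le_card hsub
      rw [Fin.card_Ioi] at hcard
      have := j.isLt
      omega
  intro j
  by_cases h : (j : ℕ) < g - s
  · rw [if_pos h]
    rcases hval j with h1 | h1
    · exact h1
    · exact absurd ((key j).mp h1) (by omega)
  · rw [if_neg h]
    exact (key j).mpr (by omega)

/-- enumeration of the special words -/
def wEnum (g : ℕ) (m : ℕ) : Fin g → ℕ := fun j =>
  if (j : ℕ) < g - m % g then m / g + 1 else m / g + 2

theorem my_count (g r : ℕ) (hg : 1 ≤ g) (hr : 1 ≤ r) :
    ((Fintype.piFinset fun _ : Fin g => Finset.Icc 1 (r + 1)).filter fun w =>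
        ∃ i, 1 ≤ i ∧ i ≤ r ∧ Monotone w ∧ ∀ j, w j = i ∨ w j = i + 1).card = r * g + 1 := by
  have hg0 : 0 < g := hg
  obtain ⟨r₀, rfl⟩ : ∃ r₀, r = r₀ + 1 := ⟨r - 1, by omega⟩
  have hdm : ∀ q s : ℕ, s < g → (g * q + s) / g = q ∧ (g * q + s) % g = s := by
    intro q s hs
    constructor
    · rw [Nat.mul_add_div hg0, Nat.div_eq_of_lt hs, Nat.add_zero]
    · rw [Nat.mul_add_mod, Nat.mod_eq_of_lt hs]
  have hw_eq : ∀ q s : ℕ, s < g → ∀ j : Fin g,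
      wEnum g (g * q + s) j = if (j : ℕ) < g - s then q + 1 else q + 2 := by
    intro q s hs j
    rw [wEnum, (hdm q s hs).1, (hdm q s hs).2]
  have hdecomp : ∀ m : ℕ, m < (r₀ + 1) * g + 1 →
      ∃ q s, s < g ∧ q ≤ r₀ + 1 ∧ (s ≠ 0 → q ≤ r₀) ∧ m = g * q + s := by
    intro m hm
    refine ⟨m / g, m % g, Nat.mod_lt _ hg0, ?_, ?_, (Nat.div_add_mod m g).symm⟩
    · by_contra hc
      push_neg at hc
      have h1 : g * (r₀ + 2) ≤ g * (m / g) := Nat.mul_le_mul_left g hc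
      have h2 : g * (r₀ + 2) = (r₀ + 1) * g + g := by ring
      have h3 := Nat.div_add_mod m g
      have h4 : m % g < g := Nat.mod_lt _ hg0
      omega
    · intro hs0
      by_contra hc
      push_neg at hc
      have h1 : g * (r₀ + 1) ≤ g * (m / g) := Nat.mul_le_mul_left g hc
      have h2 : g * (r₀ + 1) = (r₀ + 1) * g := by ring
      have h3 := Nat.div_add_mod m g
      omega
  have hset : ((Fintype.piFinset fun _ : Fin g => Finset.Icc 1 (r₀ + 1 + 1)).filter fun w =>
      ∃ i, 1 ≤ i ∧ i ≤ r₀ + 1 ∧ Monotone w ∧ ∀ j, w j = i ∨ w j = i + 1)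
      = (Finset.range ((r₀ + 1) * g + 1)).image (wEnum g) := by
    ext w
    simp only [Finset.mem_filter, Finset.mem_image, Finset.mem_range, Fintype.mem_piFinset,
      Finset.mem_Icc]
    constructor
    · rintro ⟨hwmem, i, hi1, hir, hmono, hval⟩
      set v := w ⟨0, hg0⟩ with hvdef
      set s := (Finset.univ.filter fun j => w j = v + 1).card with hsdef
      have hv1 : 1 ≤ v := (hwmem ⟨0, hg0⟩).1
      have hvcases : v = i ∨ v = i + 1 := hval ⟨0, hg0⟩
      have hval' : ∀ j, w j = v ∨ w j = v + 1 := by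
        rcases hvcases with hvi | hvi
        · intro j; rw [hvi]; exact hval j
        · intro j
          left
          have h1 := hmono (show (⟨0, hg0⟩ : Fin g) ≤ j from Fin.mk_le_of_le_val (Nat.zero_le _))
          rcases hval j with h2 | h2 <;> omega
      have hthresh := my_threshold g hg0 w v hmono hval' rfl
      rw [← hsdef] at hthresh
      have hsle : s ≤ g - 1 := by
        have h0 : (⟨0, hg0⟩ : Fin g) ∉ Finset.univ.filter fun j => w j = v + 1 := by
          simp only [Finset.mem_filter, Finset.mem_univ, true_and]; omega
        have hss : (Finset.univ.filter fun j => w j = v + 1) ⊂ Finset.univ :=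
          (Finset.ssubset_iff_of_subset (Finset.filter_subset _ _)).mpr
            ⟨⟨0, hg0⟩, Finset.mem_univ _, h0⟩
        have := Finset.card_lt_card hss
        simp only [Finset.card_univ, Fintype.card_fin] at this
        omega
      refine ⟨g * (v - 1) + s, ?_, ?_⟩
      · -- bound
        rcases hvcases with hvi | hvi
        · have h1 : g * (v - 1) ≤ g * r₀ := Nat.mul_le_mul_left g (by omega)
          have h2 : g * r₀ + g = (r₀ + 1) * g := by ring
          omega
        · -- constant case: s = 0
          have hs0 : s = 0 := by
            rw [hsdef, Finset.card_eq_zero, Finset.filter_eq_empty_iff]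
            intro j _
            rcases hval' j with h2 | h2
            · omega
            · exfalso
              rcases hval j with h3 | h3 <;> omega
          have h1 : g * (v - 1) ≤ g * (r₀ + 1) := Nat.mul_le_mul_left g (by omega)
          have h2 : g * (r₀ + 1) = (r₀ + 1) * g := Nat.mul_comm _ _
          omega
      · funext j
        rw [hw_eq (v - 1) s (by omega) j, hthresh j]
        by_cases h : (j : ℕ) < g - s
        · rw [if_pos h, if_pos h]; omega
        · rw [if_neg h, if_neg h]; omega
    · rintro ⟨m, hm, rfl⟩
      obtain ⟨q, s, hs, hq, hq2, rfl⟩ := hdecomp m hm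
      constructor
      · intro j
        rw [hw_eq q s hs j]
        have hj := j.isLt
        split_ifs with h
        · omega
        · have := hq2 (by omega)
          omega
      · by_cases hc : s = 0
        · -- constant word q + 1
          refine ⟨if q + 1 ≤ r₀ + 1 then q + 1 else r₀ + 1,
            by split_ifs with h <;> omega, by split_ifs with h <;> omega, ?_, ?_⟩
          · intro a b hab
            have ha := a.isLt
            have hb := b.isLt
            rw [hw_eq q s hs a, hw_eq q s hs b, if_pos (by omega), if_pos (by omega)]
          · intro j
            have hj := j.isLt
            rw [hw_eq q s hs j, if_pos (by omega)]
            split_ifs with h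
            · left; rfl
            · right; omega
        · have hle := hq2 hc
          refine ⟨q + 1, by omega, by omega, ?_, ?_⟩
          · intro a b hab
            have hab' : (a : ℕ) ≤ (b : ℕ) := hab
            rw [hw_eq q s hs a, hw_eq q s hs b]
            split_ifs with h1 h2 <;> omega
          · intro j
            rw [hw_eq q s hs j]
            split_ifs with h
            · left; rfl
            · right; rfl
  rw [hset, Finset.card_image_of_injOn, Finset.card_range]
  intro m hm m' hm' heq
  simp only [Finset.coe_range, Set.mem_Iio] at hm hm'
  obtain ⟨q, s, hs, hqb, hq2, rfl⟩ := hdecomp m hm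
  obtain ⟨q', s', hs', hqb', hq2', rfl⟩ := hdecomp m' hm'
  have e0 := congrFun heq ⟨0, hg0⟩
  rw [hw_eq q s hs, hw_eq q' s' hs'] at e0
  simp only [Fin.val_mk] at e0
  rw [if_pos (by omega), if_pos (by omega)] at e0
  have hqq : q = q' := by omega
  have hss : s = s' := by
    by_contra hne
    rcases Nat.lt_or_ge s s' with hlt | hge
    · have e1 := congrFun heq ⟨g - s', by omega⟩
      rw [hw_eq q s hs, hw_eq q' s' hs'] at e1
      simp only [Fin.val_mk] at e1
      rw [if_pos (by omega), if_neg (by omega)] at e1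
      omega
    · have hlt : s' < s := by omega
      have e1 := congrFun heq ⟨g - s, by omega⟩
      rw [hw_eq q s hs, hw_eq q' s' hs'] at e1
      simp only [Fin.val_mk] at e1
      rw [if_neg (by omega), if_pos (by omega)] at e1
      omega
  rw [hqq, hss]

theorem my_condII (g r : ℕ) (hr : 1 ≤ r) (w : Fin g → ℕ) : CondII g r (r * g) w := by
  intro m hm h
  obtain ⟨js, hjs, -⟩ := h
  have h1 : m ≤ g := by
    have := Fintype.card_le_of_injective js hjs.injective
    simpa using this
  rw [Nat.mul_div_cancel_left g hr] at hm
  omega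

theorem my_condIII (g r : ℕ) (hg : 1 ≤ g) (hr : 1 ≤ r) (w : Fin g → ℕ) :
    ¬CondIII g r (r * g) w ↔
      ∃ i, 1 ≤ i ∧ i ≤ r ∧ Monotone w ∧ ∀ j, w j = i ∨ w j = i + 1 := by
  have hd : r * g / r = g := Nat.mul_div_cancel_left g hr
  unfold CondIII
  rw [hd]
  constructor
  · intro h
    push_neg at h
    obtain ⟨i, hi1, hir, js, hjs, hmono, hval⟩ := h
    have hbij : Function.Bijective js := Finite.injective_iff_bijective.mp hjs.injective
    have hsurj := hbij.surjective
    refine ⟨i, hi1, hir, ?_, ?_⟩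
    · intro a b hab
      obtain ⟨a', ha'⟩ := hsurj a
      obtain ⟨b', hb'⟩ := hsurj b
      have hab' : a' ≤ b' := by
        by_contra hc
        push_neg at hc
        have := hjs hc
        rw [ha', hb'] at this
        exact absurd hab (not_le.mpr this)
      have := hmono hab'
      simpa [Function.comp, ha', hb'] using this
    · intro j
      obtain ⟨a, ha⟩ := hsurj j
      rw [← ha]
      exact hval a
  · rintro ⟨i, hi1, hir, hmono, hval⟩ h
    exact h i hi1 hir ⟨id, strictMono_id, fun a b hab => hmono hab, fun a => hval a⟩

theorem my_part1 (g r : ℕ) (hg : 1 ≤ g) (hr : 1 ≤ r) :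
    ∀ w : Fin g → ℕ, IsWord g r w →
      (¬SatisfiesConds g r (r * g) w ↔
        ∃ i, 1 ≤ i ∧ i ≤ r ∧ Monotone w ∧ ∀ j, w j = i ∨ w j = i + 1) := by
  intro w hw
  have h3 := my_condIII g r hg hr w
  have h2 := my_condII g r hr w
  constructor
  · intro hns
    by_cases hc3 : CondIII g r (r * g) w
    · have hc1 : ¬CondI g r (r * g) w := fun h => hns ⟨h, h2, hc3⟩
      rcases Nat.lt_or_ge g 2 with hg2 | hg2
      · -- g = 1
        have hgeq : g = 1 := by omega
        subst hgeq
        obtain ⟨ha, hb⟩ := hw 0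
        have hmono : Monotone w := fun a b _ => by rw [Subsingleton.elim a b]
        by_cases hvr : w 0 ≤ r
        · exact ⟨w 0, ha, hvr, hmono, fun j => Or.inl (by rw [Subsingleton.elim j 0])⟩
        · exact ⟨r, hr, le_refl r, hmono,
            fun j => Or.inr (by rw [Subsingleton.elim j 0]; omega)⟩
      · rcases Nat.lt_or_ge r 2 with hr2 | hr2
        · -- r = 1
          have hreq : r = 1 := by omega
          subst hreq
          have hmono : Monotone w := by
            by_contra hm
            apply hc1
            rw [Monotone] at hm
            push_neg at hm
            obtain ⟨a, b, hab, hwab⟩ := hm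
            have hab' : a < b := lt_of_le_of_ne hab (by rintro rfl; omega)
            have hone : g + 1 - 1 * g = 1 := by omega
            unfold CondI
            rw [hone]
            refine ⟨fun _ k => if k = 0 then a else b, fun k => ⟨?_, ?_⟩, ?_⟩
            · intro x y hxy
              fin_cases x <;> fin_cases y <;> simp_all
            · intro x y hxy
              fin_cases x <;> fin_cases y <;> simp_all [Function.comp] <;> omega
            · intro k k' hkk'
              exact absurd (Subsingleton.elim k k') hkk'
          exact ⟨1, le_refl 1, le_refl 1, hmono, fun j => by have := hw j; omega⟩
        · -- g, r ≥ 2 : CondI holds trivially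
          exfalso
          apply hc1
          have h0 : g + r - r * g = 0 := by
            have : g + r ≤ r * g := by nlinarith
            omega
          unfold CondI
          rw [h0]
          exact ⟨fun k => Fin.elim0 k, fun k => Fin.elim0 k, fun k k' _ => Fin.elim0 k⟩
    · exact h3.mp hc3
  · rintro hR ⟨-, -, hc3⟩
    exact h3.mpr hR hc3

/-- For `d = rg`, an `(r+1)`-ary word of length `g ≥ 1` fails
conditions (i)–(iii) exactly when it is a nondecreasing word all of whose letters lie
in `{i, i+1}` for some `i ∈ {1, …, r}`; there are `(g-1)r + (r+1) = rg + 1` such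
words, so the number of words satisfying conditions (i)–(iii) equals
`(r+1)^g - (rg + 1)`. -/
theorem d_eq_rg_count (g r : ℕ) (hg : 1 ≤ g) (hr : 1 ≤ r) :
    (∀ w : Fin g → ℕ, IsWord g r w →
      (¬SatisfiesConds g r (r * g) w ↔
        ∃ i, 1 ≤ i ∧ i ≤ r ∧ Monotone w ∧ ∀ j, w j = i ∨ w j = i + 1)) ∧
    ((Fintype.piFinset fun _ : Fin g => Finset.Icc 1 (r + 1)).filter fun w =>
        ∃ i, 1 ≤ i ∧ i ≤ r ∧ Monotone w ∧ ∀ j, w j = i ∨ w j = i + 1).card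
      = r * g + 1 ∧
    (g - 1) * r + (r + 1) = r * g + 1 ∧
    wordCount g r (r * g) = (r + 1) ^ g - (r * g + 1) := by
  refine ⟨my_part1 g r hg hr, my_count g r hg hr, ?_, ?_⟩
  · obtain ⟨g₀, rfl⟩ : ∃ g₀, g = g₀ + 1 := ⟨g - 1, by omega⟩
    simp only [Nat.add_sub_cancel]
    ring
  · unfold wordCount
    have hfilter : ((Fintype.piFinset fun _ : Fin g => Finset.Icc 1 (r + 1)).filter fun w =>
        SatisfiesConds g r (r * g) w)
        = ((Fintype.piFinset fun _ : Fin g => Finset.Icc 1 (r + 1)).filter fun w =>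
          ¬∃ i, 1 ≤ i ∧ i ≤ r ∧ Monotone w ∧ ∀ j, w j = i ∨ w j = i + 1) := by
      apply Finset.filter_congr
      intro w hwmem
      have hw : IsWord g r w := by
        intro j
        have := Fintype.mem_piFinset.mp hwmem j
        simpa [Finset.mem_Icc] using this
      have h := my_part1 g r hg hr w hw
      constructor
      · intro hs hex
        exact (h.mpr hex) hs
      · intro hne
        by_contra hs
        exact hne (h.mp hs)
    rw [hfilter, Finset.filter_not, Finset.card_sdiff_of_subset (Finset.filter_subset _ _)]
    have hcard : (Fintype.piFinset fun _ : Fin g => Finset.Icc 1 (r + 1)).card = (r + 1) ^ g := by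
      rw [Fintype.card_piFinset]
      simp [Nat.card_Icc]
    rw [hcard, my_count g r hg hr]
end

section
/- Let g ≥ 0 and d ≥ 1 be integers and let ω be a binary word (letters in {1,2}) of length g. If ω has a collection of at least g+1−d pairwise disjoint decreasing subsequences each of length 2 (condition (i) for parameters (g,1,d)), then ω has no (1,2)-subsequence of length d (condition (iii) for parameters (g,1,d)). -/
open scoped Classical

/-- For binary words (letters in `{1, 2}`), condition (i) for
parameters `(g,1,d)` implies condition (iii) for parameters `(g,1,d)`. -/
theorem condI_implies_condIII (g d : ℕ) (hd : 1 ≤ d) (w : Fin g → ℕ)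
    (hw : ∀ j, w j = 1 ∨ w j = 2) :
    CondI g 1 d w → CondIII g 1 d w := by
  rintro ⟨S, hS, hdisj⟩ i _ _ ⟨js, hjs, hmono, _⟩
  have hd1 : d / 1 = d := Nat.div_one d
  have hdg : d ≤ g := by
    have := Fintype.card_le_of_injective js hjs.injective
    simpa [hd1] using this
  have key : ∀ k : Fin (g + 1 - d), ∃ a : Fin 2, ∀ b : Fin (d / 1), js b ≠ S k a := by
    intro k
    by_contra h
    push_neg at h
    obtain ⟨b0, hb0⟩ := h 0
    obtain ⟨b1, hb1⟩ := h 1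
    have hlt : S k 0 < S k 1 := (hS k).1 (by norm_num)
    have hwlt : (w ∘ S k) 1 < (w ∘ S k) 0 := (hS k).2 (by norm_num : (0 : Fin 2) < 1)
    have hb : b0 < b1 := by
      have : js b0 < js b1 := by rw [hb0, hb1]; exact hlt
      exact hjs.lt_iff_lt.mp this
    have hm := hmono hb.le
    simp only [Function.comp] at hm hwlt
    rw [hb0, hb1] at hm
    omega
  choose a ha using key
  set f : Fin (g + 1 - d) → Fin g := fun k => S k (a k) with hf
  have hfin : Function.Injective f := by
    intro k k' h
    by_contra hne
    exact hdisj k k' hne (a k) (a k') h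
  have hcard : (Finset.image js Finset.univ ∪ Finset.image f Finset.univ).card ≤ g := by
    simpa using Finset.card_le_univ (Finset.image js Finset.univ ∪ Finset.image f Finset.univ)
  have hdis : Disjoint (Finset.image js Finset.univ) (Finset.image f Finset.univ) := by
    rw [Finset.disjoint_left]
    rintro x hx hx'
    simp only [Finset.mem_image, Finset.mem_univ, true_and] at hx hx'
    obtain ⟨b, rfl⟩ := hx
    obtain ⟨k, hk⟩ := hx'
    exact ha k b hk.symm
  rw [Finset.card_union_of_disjoint hdis, Finset.card_image_of_injective _ hjs.injective,
    Finset.card_image_of_injective _ hfin] at hcard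
  simp only [Finset.card_univ, Fintype.card_fin, hd1] at hcard
  omega
end

section
/- Let g ≥ 0 and d ≥ 1 be integers, and let ω be a binary word (letters in {1,2}) of length g containing a letters equal to 1 and b letters equal to 2 (so a + b = g). Then ω satisfies conditions (i)–(iii) for parameters (g,1,d) if and only if a ≥ g+1−d, b ≥ g+1−d, and in every prefix of ω the number of 1's exceeds the number of 2's by at most d−1−b. Equivalently, interpreting 1's as rightward steps and 2's as upward steps, such words correspond to up-right lattice paths from (0,0) to (a,b) that never travel below the line y = x − (d−1−b). -/
open scoped Classical

section BW
variable {g : ℕ}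

private lemma bw_card_filter_lt_le' (S : Finset (Fin g)) {n : ℕ} (h : S.card = n) (k : Fin n) :
    (S.filter fun j => j < (S.orderIsoOfFin h k : Fin g)).card ≤ (k : ℕ) := by
  classical
  have hsub : (S.filter fun j => j < (S.orderIsoOfFin h k : Fin g)) ⊆
      Finset.image (fun i : Fin n => (S.orderIsoOfFin h i : Fin g)) (Finset.Iio k) := by
    intro j hj
    rw [Finset.mem_filter] at hj
    obtain ⟨hjS, hjlt⟩ := hj
    rw [Finset.mem_image]
    refine ⟨(S.orderIsoOfFin h).symm ⟨j, hjS⟩, ?_, ?_⟩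
    · rw [Finset.mem_Iio]
      by_contra hle
      push_neg at hle
      have h1 : (S.orderIsoOfFin h k : {x // x ∈ S}) ≤ S.orderIsoOfFin h ((S.orderIsoOfFin h).symm ⟨j, hjS⟩) :=
        (S.orderIsoOfFin h).monotone hle
      rw [OrderIso.apply_symm_apply] at h1
      exact absurd hjlt (not_lt.mpr h1)
    · exact congrArg Subtype.val ((S.orderIsoOfFin h).apply_symm_apply ⟨j, hjS⟩)
  calc (S.filter fun j => j < (S.orderIsoOfFin h k : Fin g)).card
      ≤ (Finset.Iio k).card := le_trans (Finset.card_le_card hsub) Finset.card_image_le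
    _ = (k : ℕ) := Fin.card_Iio k

private lemma bw_orderIso_lt (S : Finset (Fin g)) {n : ℕ} (h : S.card = n) (k : Fin n) (x : Fin g)
    (hk : (k : ℕ) + 1 ≤ (S.filter fun j => j < x).card) :
    (S.orderIsoOfFin h k : Fin g) < x := by
  by_contra hle
  push_neg at hle
  have hsub : (S.filter fun j => j < x) ⊆ S.filter fun j => j < (S.orderIsoOfFin h k : Fin g) := by
    intro j hj
    rw [Finset.mem_filter] at hj ⊢
    exact ⟨hj.1, lt_of_lt_of_le hj.2 hle⟩
  have h1 := Finset.card_le_card hsub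
  have h2 := bw_card_filter_lt_le' S h k
  omega

private lemma bw_le_card_filter_le (S : Finset (Fin g)) {n : ℕ} (h : S.card = n) (k : Fin n) :
    (k : ℕ) + 1 ≤ (S.filter fun j => j ≤ (S.orderIsoOfFin h k : Fin g)).card := by
  classical
  have hinj : Function.Injective fun i : Fin n => (S.orderIsoOfFin h i : Fin g) :=
    fun i j hij => (S.orderIsoOfFin h).injective (Subtype.ext hij)
  have hsub : Finset.image (fun i : Fin n => (S.orderIsoOfFin h i : Fin g)) (Finset.Iic k)
      ⊆ S.filter fun j => j ≤ (S.orderIsoOfFin h k : Fin g) := by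
    intro j hj
    rw [Finset.mem_image] at hj
    obtain ⟨i, hik, rfl⟩ := hj
    rw [Finset.mem_filter]
    refine ⟨(S.orderIsoOfFin h i).2, ?_⟩
    exact_mod_cast (S.orderIsoOfFin h).monotone (Finset.mem_Iic.mp hik)
  calc (k : ℕ) + 1 = (Finset.Iic k).card := (Fin.card_Iic k).symm
    _ = (Finset.image (fun i : Fin n => (S.orderIsoOfFin h i : Fin g)) (Finset.Iic k)).card :=
        (Finset.card_image_of_injective _ hinj).symm
    _ ≤ _ := Finset.card_le_card hsub

private lemma bw_nondecr_lt {d : ℕ} (hd : 1 ≤ d) (w : Fin g → ℕ)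
    (hw : ∀ j, w j = 1 ∨ w j = 2)
    (hpre : ∀ m, m ≤ g →
      (((Finset.univ.filter fun j : Fin g => (j : ℕ) < m ∧ w j = 1).card : ℤ)
        ≤ ((Finset.univ.filter fun j : Fin g => (j : ℕ) < m ∧ w j = 2).card : ℤ)
          + ((d : ℤ) - 1 - ((Finset.univ.filter fun j : Fin g => w j = 2).card : ℤ))))
    {m : ℕ} (js : Fin m → Fin g) (hjs : StrictMono js) (hmono : Monotone (w ∘ js)) :
    m < d := by
  classical
  set b := (Finset.univ.filter fun j : Fin g => w j = 2).card with hbdef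
  have hb1 : b + 1 ≤ d := by
    have h0 := hpre 0 (Nat.zero_le g)
    have e1 : (Finset.univ.filter fun j : Fin g => (j : ℕ) < 0 ∧ w j = 1) = ∅ := by
      apply Finset.filter_false_of_mem; intro j _; omega
    have e2 : (Finset.univ.filter fun j : Fin g => (j : ℕ) < 0 ∧ w j = 2) = ∅ := by
      apply Finset.filter_false_of_mem; intro j _; omega
    rw [e1, e2] at h0
    simp only [Finset.card_empty, Nat.cast_zero] at h0
    omega
  set T := Finset.univ.filter fun i : Fin m => w (js i) = 1 with hTdef
  by_cases hT : T.Nonempty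
  · set t := T.max' hT with htdef
    have ht1 : w (js t) = 1 := (Finset.mem_filter.mp (T.max'_mem hT)).2
    set M := (js t : ℕ) + 1 with hMdef
    have hMg : M ≤ g := (js t).isLt
    have hF : (t : ℕ) + 1 ≤ (Finset.univ.filter fun j : Fin g => (j : ℕ) < M ∧ w j = 1).card := by
      have := Finset.card_le_card_of_injOn (s := Finset.Iic t)
        (t := Finset.univ.filter fun j : Fin g => (j : ℕ) < M ∧ w j = 1) js ?_ ?_
      · rwa [Fin.card_Iic] at this
      · intro i hi
        rw [Finset.mem_coe, Finset.mem_Iic] at hi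
        rw [Finset.mem_coe, Finset.mem_filter]
        have hle : js i ≤ js t := hjs.monotone hi
        have hw1 : w (js i) = 1 := by
          have h2 := hmono (a := i) (b := t) hi
          rcases hw (js i) with h | h
          · exact h
          · simp only [Function.comp_apply] at h2; omega
        exact ⟨Finset.mem_univ _, by omega, hw1⟩
      · exact fun i _ j _ hij => hjs.injective hij
    have hs' : m - 1 - (t : ℕ) ≤
        (Finset.univ.filter fun j : Fin g => ¬ ((j : ℕ) < M) ∧ w j = 2).card := by
      have := Finset.card_le_card_of_injOn (s := Finset.Ioi t)
        (t := Finset.univ.filter fun j : Fin g => ¬ ((j : ℕ) < M) ∧ w j = 2) js ?_ ?_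
      · rwa [Fin.card_Ioi] at this
      · intro i hi
        rw [Finset.mem_coe, Finset.mem_Ioi] at hi
        rw [Finset.mem_coe, Finset.mem_filter]
        have hlt : js t < js i := hjs hi
        have hw2 : w (js i) = 2 := by
          rcases hw (js i) with h | h
          · exfalso
            have hiT : i ∈ T := by rw [hTdef, Finset.mem_filter]; exact ⟨Finset.mem_univ _, h⟩
            have := T.le_max' i hiT
            rw [← htdef] at this
            exact absurd hi (not_lt.mpr this)
          · exact h
        have : (js t : ℕ) < (js i : ℕ) := hlt
        exact ⟨Finset.mem_univ _, by omega, hw2⟩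
      · exact fun i _ j _ hij => hjs.injective hij
    have hsplit : (Finset.univ.filter fun j : Fin g => (j : ℕ) < M ∧ w j = 2).card
        + (Finset.univ.filter fun j : Fin g => ¬ ((j : ℕ) < M) ∧ w j = 2).card = b := by
      rw [hbdef, ← Finset.card_union_of_disjoint]
      · congr 1
        ext j
        simp only [Finset.mem_union, Finset.mem_filter, Finset.mem_univ, true_and]
        tauto
      · rw [Finset.disjoint_left]
        intro j hj1 hj2
        rw [Finset.mem_filter] at hj1 hj2
        exact hj2.2.1 hj1.2.1
    have hP := hpre M hMg
    have htm : (t : ℕ) < m := t.isLt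
    omega
  · have hall : ∀ i : Fin m, w (js i) = 2 := by
      intro i
      rcases hw (js i) with h | h
      · exact absurd ⟨i, by rw [hTdef, Finset.mem_filter]; exact ⟨Finset.mem_univ _, h⟩⟩ hT
      · exact h
    have hmb : m ≤ b := by
      have := Finset.card_le_card_of_injOn (s := (Finset.univ : Finset (Fin m)))
        (t := Finset.univ.filter fun j : Fin g => w j = 2) js
        (fun i _ => Finset.mem_filter.mpr ⟨Finset.mem_univ _, hall i⟩)
        (fun i _ j _ hij => hjs.injective hij)
      simpa using this
    omega

end BW

/-- A binary word `w` of length `g` with `a` letters `1` and `b`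
letters `2` satisfies conditions (i)–(iii) for parameters `(g,1,d)` if and only if
`a ≥ g + 1 - d`, `b ≥ g + 1 - d`, and in every prefix the number of `1`'s exceeds the
number of `2`'s by at most `d - 1 - b` (equivalently, the corresponding up-right
lattice path from `(0,0)` to `(a,b)` never travels below the line
`y = x - (d - 1 - b)`). -/
theorem binary_words_lattice_paths (g d : ℕ) (hd : 1 ≤ d) (w : Fin g → ℕ)
    (hw : ∀ j, w j = 1 ∨ w j = 2) (a b : ℕ)
    (ha : a = (Finset.univ.filter fun j : Fin g => w j = 1).card)
    (hb : b = (Finset.univ.filter fun j : Fin g => w j = 2).card) :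
    SatisfiesConds g 1 d w ↔
      g + 1 - d ≤ a ∧ g + 1 - d ≤ b ∧
        ∀ m, m ≤ g →
          (((Finset.univ.filter fun j : Fin g => (j : ℕ) < m ∧ w j = 1).card : ℤ)
            ≤ ((Finset.univ.filter fun j : Fin g => (j : ℕ) < m ∧ w j = 2).card : ℤ)
              + ((d : ℤ) - 1 - (b : ℤ))) := by
  classical
  have hab : a + b = g := by
    have hsplit := Finset.card_filter_add_card_filter_not
      (s := (Finset.univ : Finset (Fin g))) (p := fun j => w j = 1)
    have hneg : (Finset.univ.filter fun j : Fin g => ¬ w j = 1) =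
        (Finset.univ.filter fun j : Fin g => w j = 2) := by
      ext j
      simp only [Finset.mem_filter, Finset.mem_univ, true_and]
      rcases hw j with h | h <;> simp [h]
    rw [hneg] at hsplit
    rw [ha, hb]
    simpa using hsplit
  constructor
  · rintro ⟨_, _, hIII⟩
    have hIII1 := hIII 1 le_rfl le_rfl
    rw [Nat.div_one] at hIII1
    have key : ∀ C : Finset (Fin g),
        (∀ j ∈ C, ∀ j' ∈ C, j ≤ j' → w j ≤ w j') → C.card + 1 ≤ d := by
      intro C hC
      by_contra hcard
      push_neg at hcard
      have hdC : d ≤ C.card := by omega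
      refine hIII1 ⟨fun i => C.orderEmbOfCardLe hdC i, (C.orderEmbOfCardLe hdC).strictMono, ?_, ?_⟩
      · intro i i' hii
        exact hC _ (C.orderEmbOfCardLe_mem hdC i) _ (C.orderEmbOfCardLe_mem hdC i')
          ((C.orderEmbOfCardLe hdC).monotone hii)
      · intro i
        rcases hw (C.orderEmbOfCardLe hdC i) with h | h
        · exact Or.inl h
        · exact Or.inr h
    have hbd : b + 1 ≤ d := by
      rw [hb]
      apply key
      intro j hj j' hj' _
      rw [Finset.mem_filter] at hj hj'
      omega
    have had : a + 1 ≤ d := by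
      rw [ha]
      apply key
      intro j hj j' hj' _
      rw [Finset.mem_filter] at hj hj'
      omega
    refine ⟨by omega, by omega, ?_⟩
    intro m hm
    by_contra hlt
    push_neg at hlt
    set C := (Finset.univ.filter fun j : Fin g => (j : ℕ) < m ∧ w j = 1) ∪
        (Finset.univ.filter fun j : Fin g => ¬ ((j : ℕ) < m) ∧ w j = 2) with hCdef
    have hCmono : ∀ j ∈ C, ∀ j' ∈ C, j ≤ j' → w j ≤ w j' := by
      intro j hj j' hj' hle
      rw [hCdef, Finset.mem_union, Finset.mem_filter, Finset.mem_filter] at hj hj'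
      rcases hj with ⟨_, _, h1⟩ | ⟨_, hnm, h2⟩
      · rcases hw j' with h | h <;> omega
      · have hjj : (j : ℕ) ≤ (j' : ℕ) := hle
        rcases hj' with ⟨_, hm', _⟩ | ⟨_, _, h2'⟩
        · omega
        · omega
    have hcd := key C hCmono
    have hdisj : Disjoint (Finset.univ.filter fun j : Fin g => (j : ℕ) < m ∧ w j = 1)
        (Finset.univ.filter fun j : Fin g => ¬ ((j : ℕ) < m) ∧ w j = 2) := by
      rw [Finset.disjoint_left]
      intro j hj1 hj2
      rw [Finset.mem_filter] at hj1 hj2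
      exact hj2.2.1 hj1.2.1
    have hCcard : C.card = (Finset.univ.filter fun j : Fin g => (j : ℕ) < m ∧ w j = 1).card
        + (Finset.univ.filter fun j : Fin g => ¬ ((j : ℕ) < m) ∧ w j = 2).card :=
      Finset.card_union_of_disjoint hdisj
    have hsplit2 : (Finset.univ.filter fun j : Fin g => (j : ℕ) < m ∧ w j = 2).card
        + (Finset.univ.filter fun j : Fin g => ¬ ((j : ℕ) < m) ∧ w j = 2).card = b := by
      rw [hb, ← Finset.card_union_of_disjoint]
      · congr 1
        ext j
        simp only [Finset.mem_union, Finset.mem_filter, Finset.mem_univ, true_and]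
        tauto
      · rw [Finset.disjoint_left]
        intro j hj1 hj2
        rw [Finset.mem_filter] at hj1 hj2
        exact hj2.2.1 hj1.2.1
    omega
  · rintro ⟨hag, hbg, hpre⟩
    have hpre' : ∀ m, m ≤ g →
        (((Finset.univ.filter fun j : Fin g => (j : ℕ) < m ∧ w j = 1).card : ℤ)
          ≤ ((Finset.univ.filter fun j : Fin g => (j : ℕ) < m ∧ w j = 2).card : ℤ)
            + ((d : ℤ) - 1 - ((Finset.univ.filter fun j : Fin g => w j = 2).card : ℤ))) := by
      rw [← hb]; exact hpre
    have hlen : ∀ {m : ℕ} (js : Fin m → Fin g), StrictMono js → Monotone (w ∘ js) → m < d :=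
      fun js h1 h2 => bw_nondecr_lt hd w hw hpre' js h1 h2
    have hb1 : b + 1 ≤ d := by
      have h0 := hpre 0 (Nat.zero_le g)
      have e1 : (Finset.univ.filter fun j : Fin g => (j : ℕ) < 0 ∧ w j = 1) = ∅ := by
        apply Finset.filter_false_of_mem; intro j _; omega
      have e2 : (Finset.univ.filter fun j : Fin g => (j : ℕ) < 0 ∧ w j = 2) = ∅ := by
        apply Finset.filter_false_of_mem; intro j _; omega
      rw [e1, e2] at h0
      simp only [Finset.card_empty, Nat.cast_zero] at h0
      omega
    refine ⟨?_, ?_, ?_⟩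
    · -- CondI
      by_cases hc0 : g + 1 - d = 0
      · have hemp : IsEmpty (Fin (g + 1 - d)) := by rw [hc0]; infer_instance
        exact ⟨fun k => isEmptyElim k, fun k => isEmptyElim k, fun k k' _ _ _ => isEmptyElim k⟩
      · have hdg : d ≤ g := by omega
        have hkb : ∀ k : Fin (g + 1 - d), (k : ℕ) < b := fun k => by have := k.isLt; omega
        have hka : ∀ k : Fin (g + 1 - d), (d - 1 - b) + (k : ℕ) < a := fun k => by
          have := k.isLt; omega
        set A := Finset.univ.filter fun j : Fin g => w j = 1 with hA
        set B := Finset.univ.filter fun j : Fin g => w j = 2 with hB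
        set p : Fin (g + 1 - d) → Fin g :=
          fun k => (A.orderIsoOfFin ha.symm ⟨(d - 1 - b) + k, hka k⟩ : Fin g) with hp
        set q : Fin (g + 1 - d) → Fin g :=
          fun k => (B.orderIsoOfFin hb.symm ⟨k, hkb k⟩ : Fin g) with hqd
        have hpA : ∀ k, w (p k) = 1 := fun k =>
          (Finset.mem_filter.mp (A.orderIsoOfFin ha.symm ⟨(d - 1 - b) + k, hka k⟩).2).2
        have hqB : ∀ k, w (q k) = 2 := fun k =>
          (Finset.mem_filter.mp (B.orderIsoOfFin hb.symm ⟨k, hkb k⟩).2).2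
        have hqp : ∀ k, q k < p k := by
          intro k
          set x := p k with hx
          have hF : (d - 1 - b) + (k : ℕ) + 1 ≤
              (Finset.univ.filter fun j : Fin g => (j : ℕ) < (x : ℕ) + 1 ∧ w j = 1).card := by
            have h1 := bw_le_card_filter_le A ha.symm ⟨(d - 1 - b) + k, hka k⟩
            have heq : (A.filter fun j => j ≤ x) =
                Finset.univ.filter fun j : Fin g => (j : ℕ) < (x : ℕ) + 1 ∧ w j = 1 := by
              rw [hA, Finset.filter_filter]
              ext j
              simp only [Finset.mem_filter, Finset.mem_univ, true_and]
              constructor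
              · rintro ⟨h1, h2⟩
                have : (j : ℕ) ≤ (x : ℕ) := h2
                exact ⟨by omega, h1⟩
              · rintro ⟨h1, h2⟩
                refine ⟨h2, ?_⟩
                have : (j : ℕ) ≤ (x : ℕ) := by omega
                exact this
            rw [heq] at h1
            exact h1
          have hP := hpre ((x : ℕ) + 1) x.isLt
          have heq2 : (Finset.univ.filter fun j : Fin g => (j : ℕ) < (x : ℕ) + 1 ∧ w j = 2) =
              B.filter fun j => j < x := by
            rw [hB, Finset.filter_filter]
            ext j
            simp only [Finset.mem_filter, Finset.mem_univ, true_and]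
            constructor
            · rintro ⟨h1, h2⟩
              refine ⟨h2, ?_⟩
              have hjx : (j : ℕ) ≤ (x : ℕ) := by omega
              rcases lt_or_eq_of_le hjx with h | h
              · exact h
              · exfalso
                have : j = x := Fin.ext h
                rw [this] at h2
                rw [hx] at h2
                have := hpA k
                omega
            · rintro ⟨h1, h2⟩
              have : (j : ℕ) < (x : ℕ) := h2
              exact ⟨by omega, h1⟩
          have hsM : (k : ℕ) + 1 ≤ (B.filter fun j => j < x).card := by
            rw [← heq2]
            omega
          exact bw_orderIso_lt B hb.symm ⟨k, hkb k⟩ x hsM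
        refine ⟨fun k i => if (i : ℕ) = 0 then q k else p k, ?_, ?_⟩
        · intro k
          constructor
          · intro i j hij
            have h1 : (i : ℕ) < (j : ℕ) := hij
            have h2 : (j : ℕ) < 2 := j.isLt
            have hi0 : (i : ℕ) = 0 := by omega
            have hj1 : ¬ ((j : ℕ) = 0) := by omega
            simp only [hi0, hj1, if_true, if_false, ite_true, ite_false]
            exact hqp k
          · intro i j hij
            have h1 : (i : ℕ) < (j : ℕ) := hij
            have h2 : (j : ℕ) < 2 := j.isLt
            have hi0 : (i : ℕ) = 0 := by omega
            have hj1 : ¬ ((j : ℕ) = 0) := by omega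
            simp only [Function.comp_apply, hi0, hj1, if_true, if_false, ite_true, ite_false]
            rw [hpA k, hqB k]
            omega
        · intro k k' hkk i j
          have hqinj : q k ≠ q k' := by
            intro h
            apply hkk
            have h2 := (B.orderIsoOfFin hb.symm).injective (Subtype.ext h)
            have h3 : (k : ℕ) = (k' : ℕ) := by simpa using h2
            exact Fin.ext h3
          have hpinj : p k ≠ p k' := by
            intro h
            apply hkk
            have h2 := (A.orderIsoOfFin ha.symm).injective (Subtype.ext h)
            have h3 : (d - 1 - b) + (k : ℕ) = (d - 1 - b) + (k' : ℕ) := by simpa using h2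
            exact Fin.ext (by omega)
          have hqp' : ∀ k₁ k₂, q k₁ ≠ p k₂ := by
            intro k₁ k₂ h
            have := hqB k₁
            rw [h, hpA k₂] at this
            omega
          by_cases hi : (i : ℕ) = 0 <;> by_cases hj : (j : ℕ) = 0 <;>
            simp only [hi, hj, if_true, if_false, ite_true, ite_false]
          · exact hqinj
          · exact hqp' k (by exact k')
          · exact fun h => hqp' k' k h.symm
          · exact hpinj
    · -- CondII
      intro m hm hex
      obtain ⟨js, h1, h2⟩ := hex
      have := hlen js h1 h2
      rw [Nat.div_one] at hm
      omega
    · -- CondIII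
      intro i _ _ hex
      obtain ⟨js, h1, h2, _⟩ := hex
      have := hlen js h1 h2
      rw [Nat.div_one] at this
      omega
end

section
/- Let g ≥ 0 be an even integer and set d = g/2 + 1. Then the number of binary words (letters in {1,2}) of length g satisfying conditions (i)–(iii) for parameters (g,1,d) equals the Catalan number C_{g/2} = (1/(g/2 + 1))·binom(g, g/2). -/
open scoped Classical

namespace DyckAux

open DyckStep

noncomputable def cnt (g : ℕ) (w : Fin g → ℕ) (c k : ℕ) : ℕ :=
  (Finset.univ.filter fun j : Fin g => (j : ℕ) < k ∧ w j = c).card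

lemma count_take_ofFn {g : ℕ} (f : Fin g → DyckStep) (y : DyckStep) :
    ∀ k, k ≤ g → ((List.ofFn f).take k).count y
      = (Finset.univ.filter fun j : Fin g => (j : ℕ) < k ∧ f j = y).card := by
  intro k
  induction k with
  | zero => intro _; simp
  | succ k ih =>
    intro hk
    have hk' : k < g := hk
    rw [List.take_succ, List.count_append, ih (le_of_lt hk')]
    have h1 : (List.ofFn f)[k]? = some (f ⟨k, hk'⟩) := by
      rw [List.getElem?_eq_getElem (by simpa using hk')]
      simp
    rw [h1]
    have hsplit : (Finset.univ.filter fun j : Fin g => (j : ℕ) < k + 1 ∧ f j = y)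
        = (Finset.univ.filter fun j : Fin g => (j : ℕ) < k ∧ f j = y) ∪
          (Finset.univ.filter fun j : Fin g => j = ⟨k, hk'⟩ ∧ f j = y) := by
      ext j
      simp only [Finset.mem_filter, Finset.mem_union, Finset.mem_univ, true_and]
      constructor
      · rintro ⟨h1, h2⟩
        rcases Nat.lt_or_ge (j : ℕ) k with h | h
        · exact Or.inl ⟨h, h2⟩
        · exact Or.inr ⟨Fin.ext (by simp only [Fin.val_mk]; omega), h2⟩
      · rintro (⟨hj, h2⟩ | ⟨hj, h2⟩)
        · exact ⟨Nat.lt_succ_of_lt hj, h2⟩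
        · subst hj; exact ⟨Nat.lt_succ_self k, h2⟩
    have hdisj : Disjoint (Finset.univ.filter fun j : Fin g => (j : ℕ) < k ∧ f j = y)
        (Finset.univ.filter fun j : Fin g => j = ⟨k, hk'⟩ ∧ f j = y) := by
      rw [Finset.disjoint_left]
      rintro j hj hj'
      simp only [Finset.mem_filter, Finset.mem_univ, true_and] at hj hj'
      rcases hj' with ⟨rfl, -⟩
      exact absurd hj.1 (by simp)
    have hcard2 : (Finset.univ.filter fun j : Fin g => j = ⟨k, hk'⟩ ∧ f j = y).card
        = if f ⟨k, hk'⟩ = y then 1 else 0 := by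
      by_cases hy : f ⟨k, hk'⟩ = y
      · rw [if_pos hy, show (Finset.univ.filter fun j : Fin g => j = ⟨k, hk'⟩ ∧ f j = y)
            = {⟨k, hk'⟩} from ?_, Finset.card_singleton]
        ext j
        simp only [Finset.mem_filter, Finset.mem_univ, true_and, Finset.mem_singleton]
        exact ⟨fun h => h.1, fun h => ⟨h, h ▸ hy⟩⟩
      · rw [if_neg hy, show (Finset.univ.filter fun j : Fin g => j = ⟨k, hk'⟩ ∧ f j = y)
            = ∅ from ?_, Finset.card_empty]
        ext j
        simp only [Finset.mem_filter, Finset.mem_univ, true_and, Finset.notMem_empty, iff_false,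
          not_and]
        rintro rfl; exact hy
    have hcount : List.count y (some (f ⟨k, hk'⟩)).toList = if f ⟨k, hk'⟩ = y then 1 else 0 := by
      by_cases hy : f ⟨k, hk'⟩ = y <;> simp [Option.toList, List.count_singleton', hy]
    rw [hsplit, Finset.card_union_of_disjoint hdisj, hcard2, hcount]

lemma count_U_take {g : ℕ} (w : Fin g → ℕ) {k : ℕ} (hk : k ≤ g) :
    ((List.ofFn fun j => if w j = 2 then U else D).take k).count U = cnt g w 2 k := by
  rw [count_take_ofFn _ _ k hk, cnt]
  congr 1
  ext j
  by_cases h : w j = 2 <;> simp [h]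

lemma count_D_take {g : ℕ} (w : Fin g → ℕ) (hw : ∀ j, 1 ≤ w j ∧ w j ≤ 2) {k : ℕ} (hk : k ≤ g) :
    ((List.ofFn fun j => if w j = 2 then U else D).take k).count D = cnt g w 1 k := by
  rw [count_take_ofFn _ _ k hk, cnt]
  congr 1
  ext j
  have := hw j
  by_cases h : w j = 2 <;> simp [h] <;> omega


lemma cnt_total {g : ℕ} {w : Fin g → ℕ} (hw : ∀ j, 1 ≤ w j ∧ w j ≤ 2) :
    cnt g w 1 g + cnt g w 2 g = g := by
  rw [cnt, cnt]
  have h1 : (Finset.univ.filter fun j : Fin g => (j : ℕ) < g ∧ w j = 1)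
      = Finset.univ.filter fun j : Fin g => w j = 1 := by
    ext j; simp [j.isLt]
  have h2 : (Finset.univ.filter fun j : Fin g => (j : ℕ) < g ∧ w j = 2)
      = Finset.univ.filter fun j : Fin g => ¬ (w j = 1) := by
    ext j
    have := hw j
    simp only [Finset.mem_filter, Finset.mem_univ, true_and, j.isLt]
    omega
  rw [h1, h2, Finset.card_filter_add_card_filter_not, Finset.card_univ, Fintype.card_fin]

def DyckCond (g n : ℕ) (w : Fin g → ℕ) : Prop :=
  (∀ k, k ≤ g → cnt g w 1 k ≤ cnt g w 2 k) ∧ cnt g w 2 g = n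

lemma satisfies_to_dyck {g n : ℕ} (hn : g = 2 * n) {w : Fin g → ℕ}
    (hw : ∀ j, 1 ≤ w j ∧ w j ≤ 2) (h : SatisfiesConds g 1 (n + 1) w) :
    DyckCond g n w := by
  obtain ⟨⟨S, hS, hdisj⟩, -, -⟩ := h
  have hm : g + 1 - (n + 1 : ℕ) = n := by omega
  have h01 : (0 : Fin 2) < 1 := by decide
  have hS21 : ∀ k, w (S k 1) < w (S k 0) := fun k => (hS k).2 h01
  have hS2 : ∀ k, w (S k 0) = 2 := fun k => by
    have h1 := hw (S k 0); have h2 := hw (S k 1); have := hS21 k; omega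
  have hS1 : ∀ k, w (S k 1) = 1 := fun k => by
    have h1 := hw (S k 0); have h2 := hw (S k 1); have := hS21 k; omega
  -- the map (k, a) ↦ S k a is bijective
  have hinj : Function.Injective (fun p : Fin (g + 1 - (n + 1)) × Fin 2 => S p.1 p.2) := by
    rintro ⟨k, a⟩ ⟨k', a'⟩ hp
    simp only at hp
    by_cases hk : k = k'
    · subst hk
      exact Prod.ext rfl ((hS k).1.injective hp)
    · exact absurd hp (hdisj k k' hk a a')
  have hbij : Function.Bijective (fun p : Fin (g + 1 - (n + 1)) × Fin 2 => S p.1 p.2) := by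
    rw [Fintype.bijective_iff_injective_and_card]
    refine ⟨hinj, ?_⟩
    simp [hm]
    omega
  set E := Equiv.ofBijective _ hbij with hE
  have hEapp : ∀ j : Fin g, S (E.symm j).1 (E.symm j).2 = j := fun j => E.apply_symm_apply j
  have fin2 : ∀ a : Fin 2, a = 0 ∨ a = 1 := by decide
  -- every position with letter 1 is S k 1, with letter 2 is S k 0
  have hidx1 : ∀ j : Fin g, w j = 1 → S (E.symm j).1 1 = j := by
    intro j hj
    rcases fin2 (E.symm j).2 with ha | ha
    · have hsj := hEapp j
      rw [ha] at hsj
      rw [← hsj, hS2] at hj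
      omega
    · have := hEapp j; rwa [ha] at this
  have hidx2 : ∀ j : Fin g, w j = 2 → S (E.symm j).1 0 = j := by
    intro j hj
    rcases fin2 (E.symm j).2 with ha | ha
    · have := hEapp j; rwa [ha] at this
    · have hsj := hEapp j
      rw [ha] at hsj
      rw [← hsj, hS1] at hj
      omega
  constructor
  · -- prefix condition
    intro k _
    apply Finset.card_le_card_of_injOn (fun j => S (E.symm j).1 0)
    · intro j hj
      simp only [Finset.mem_coe, Finset.mem_filter, Finset.mem_univ, true_and] at hj ⊢
      have hji := hidx1 j hj.2
      have hlt : S (E.symm j).1 0 < S (E.symm j).1 1 := (hS _).1 h01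
      rw [hji] at hlt
      exact ⟨lt_trans hlt (by exact_mod_cast hj.1), hS2 _⟩
    · intro j hj j' hj' heq
      simp only [Finset.coe_filter, Set.mem_setOf_eq] at hj hj'
      have h1 := hidx1 j hj.2.2
      have h2 := hidx1 j' hj'.2.2
      by_cases hk : (E.symm j).1 = (E.symm j').1
      · rw [← h1, ← h2, hk]
      · exact absurd heq (hdisj _ _ hk 0 0)
  · -- total count
    have : (Finset.univ : Finset (Fin (g + 1 - (n + 1)))).card
        = (Finset.univ.filter fun j : Fin g => (j : ℕ) < g ∧ w j = 2).card := by
      apply Finset.card_bij (fun k _ => S k 0)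
      · intro k _
        simp only [Finset.mem_filter, Finset.mem_univ, true_and]
        exact ⟨(S k 0).isLt, hS2 k⟩
      · intro k _ k' _ heq
        by_contra hk
        exact hdisj k k' hk 0 0 heq
      · intro j hj
        simp only [Finset.mem_filter, Finset.mem_univ, true_and] at hj
        exact ⟨(E.symm j).1, Finset.mem_univ _, hidx2 j hj.2⟩
    rw [cnt, ← this, Finset.card_univ, Fintype.card_fin, hm]

lemma cnt_mono {g : ℕ} (w : Fin g → ℕ) (c : ℕ) {k k' : ℕ} (h : k ≤ k') :
    cnt g w c k ≤ cnt g w c k' := by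
  apply Finset.card_le_card
  intro j hj
  simp only [Finset.mem_filter, Finset.mem_univ, true_and] at hj ⊢
  exact ⟨lt_of_lt_of_le hj.1 h, hj.2⟩

lemma no_subseq {g n : ℕ} (hn : g = 2 * n) {w : Fin g → ℕ}
    (hw : ∀ j, 1 ≤ w j ∧ w j ≤ 2) (hd : DyckCond g n w) :
    ¬∃ js : Fin (n + 1) → Fin g, StrictMono js ∧ Monotone (w ∘ js) := by
  rintro ⟨js, hsm, hmono⟩
  have hcnt1 : cnt g w 1 g = n := by
    have := cnt_total hw
    rw [hd.2] at this
    omega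
  by_cases hall : ∀ a, w (js a) = 1
  · -- n + 1 distinct ones
    have : (Finset.univ : Finset (Fin (n + 1))).card ≤ cnt g w 1 g := by
      apply Finset.card_le_card_of_injOn js
      · intro a _
        simp only [Finset.mem_coe, Finset.mem_filter, Finset.mem_univ, true_and]
        exact ⟨(js a).isLt, hall a⟩
      · exact fun a _ a' _ h => hsm.injective h
    simp only [Finset.card_univ, Fintype.card_fin, hcnt1] at this
    omega
  · push_neg at hall
    have hTne : (Finset.univ.filter fun a : Fin (n + 1) => w (js a) = 2).Nonempty := by
      obtain ⟨a, ha⟩ := hall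
      refine ⟨a, ?_⟩
      simp only [Finset.mem_filter, Finset.mem_univ, true_and]
      have := hw (js a); omega
    set t := (Finset.univ.filter fun a : Fin (n + 1) => w (js a) = 2).min' hTne with ht
    have htmem : w (js t) = 2 := by
      have := Finset.min'_mem _ hTne
      simpa using this
    have hbefore : ∀ a, a < t → w (js a) = 1 := by
      intro a ha
      have : w (js a) ≠ 2 := by
        intro h2
        have : t ≤ a := Finset.min'_le _ _ (by simpa using h2)
        exact absurd ha (not_lt.mpr this)
      have := hw (js a); omega
    have hafter : ∀ a, t ≤ a → w (js a) = 2 := by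
      intro a ha
      have h1 : w (js t) ≤ w (js a) := hmono ha
      have := hw (js a); omega
    set K := ((js t : Fin g) : ℕ) with hK
    -- cnt 1 K ≥ t
    have h1 : (t : ℕ) ≤ cnt g w 1 K := by
      have : (Finset.Iio t).card ≤ cnt g w 1 K := by
        apply Finset.card_le_card_of_injOn js
        · intro a ha
          simp only [Finset.mem_coe, Finset.mem_Iio] at ha
          simp only [Finset.mem_coe, Finset.mem_filter, Finset.mem_univ, true_and]
          exact ⟨hsm ha, hbefore a ha⟩
        · exact fun a _ a' _ h => hsm.injective h
      rwa [Fin.card_Iio] at this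
    -- positions ≥ K with letter 2 : at least n + 1 - t
    have h2 : (n + 1 - (t : ℕ)) ≤
        (Finset.univ.filter fun j : Fin g => K ≤ (j : ℕ) ∧ w j = 2).card := by
      have : (Finset.Ici t).card ≤
          (Finset.univ.filter fun j : Fin g => K ≤ (j : ℕ) ∧ w j = 2).card := by
        apply Finset.card_le_card_of_injOn js
        · intro a ha
          simp only [Finset.mem_coe, Finset.mem_Ici] at ha
          simp only [Finset.mem_coe, Finset.mem_filter, Finset.mem_univ, true_and]
          exact ⟨by exact_mod_cast hsm.monotone ha, hafter a ha⟩
        · exact fun a _ a' _ h => hsm.injective h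
      rwa [Fin.card_Ici] at this
    -- the two sets of 2s are disjoint and contained in all 2s
    have h3 : cnt g w 2 K +
        (Finset.univ.filter fun j : Fin g => K ≤ (j : ℕ) ∧ w j = 2).card ≤ n := by
      rw [← hd.2, cnt, cnt, ← Finset.card_union_of_disjoint]
      · apply Finset.card_le_card
        intro j hj
        simp only [Finset.mem_union, Finset.mem_filter, Finset.mem_univ, true_and] at hj ⊢
        rcases hj with h | h
        · exact ⟨j.isLt, h.2⟩
        · exact ⟨j.isLt, h.2⟩
      · rw [Finset.disjoint_left]
        intro j hj hj'
        simp only [Finset.mem_filter, Finset.mem_univ, true_and] at hj hj'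
        omega
    have h4 := hd.1 K (le_of_lt (js t).isLt)
    have h5 : (t : ℕ) < n + 1 := t.isLt
    omega

section Enum
variable {g n : ℕ}

lemma enum_lt (hn : g = 2 * n) {w : Fin g → ℕ}
    (hd : DyckCond g n w)
    (hA : (Finset.univ.filter fun j : Fin g => w j = 2).card = n)
    (hB : (Finset.univ.filter fun j : Fin g => w j = 1).card = n) (k : Fin n) :
    ((Finset.univ.filter fun j : Fin g => w j = 2).orderIsoOfFin hA k : Fin g) <
      ((Finset.univ.filter fun j : Fin g => w j = 1).orderIsoOfFin hB k : Fin g) := by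
  set A := Finset.univ.filter fun j : Fin g => w j = 2 with hAdef
  set B := Finset.univ.filter fun j : Fin g => w j = 1 with hBdef
  set oA := A.orderIsoOfFin hA with hoA
  set oB := B.orderIsoOfFin hB with hoB
  set a : Fin g := (oA k : Fin g) with hadef
  set b : Fin g := (oB k : Fin g) with hbdef
  have hwb : w b = 1 := (Finset.mem_filter.mp (oB k).2).2
  have hwa : w a = 2 := (Finset.mem_filter.mp (oA k).2).2
  -- step 1 : k + 1 ≤ cnt 1 (b + 1)
  have step1 : (k : ℕ) + 1 ≤ cnt g w 1 ((b : ℕ) + 1) := by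
    have hle : (Finset.Iic k).card ≤ cnt g w 1 ((b : ℕ) + 1) := by
      apply Finset.card_le_card_of_injOn (fun i => (oB i : Fin g))
      · intro i hi
        simp only [Finset.mem_coe, Finset.mem_Iic] at hi
        simp only [cnt, Finset.mem_coe, Finset.mem_filter, Finset.mem_univ, true_and]
        have h1 : (oB i : B) ≤ oB k := oB.monotone hi
        have h2 : ((oB i : Fin g) : ℕ) ≤ (b : ℕ) := h1
        have h3 : w (oB i : Fin g) = 1 := (Finset.mem_filter.mp (oB i).2).2
        exact ⟨by omega, h3⟩
      · intro i _ i' _ h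
        exact oB.injective (Subtype.coe_injective h)
    rwa [Fin.card_Iic] at hle
  have step2 : (k : ℕ) + 1 ≤ cnt g w 2 ((b : ℕ) + 1) :=
    le_trans step1 (hd.1 _ (by have := b.isLt; omega))
  have step3 : cnt g w 2 ((b : ℕ) + 1) = cnt g w 2 (b : ℕ) := by
    unfold cnt
    congr 1
    ext j
    simp only [Finset.mem_filter, Finset.mem_univ, true_and, and_congr_left_iff]
    intro hj2
    constructor
    · intro h
      rcases Nat.lt_or_ge (j : ℕ) (b : ℕ) with h' | h'
      · exact h'
      · exfalso
        have : j = b := Fin.ext (by omega)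
        rw [this] at hj2
        omega
    · intro h; omega
  -- step 4 : conclude a < b
  by_contra hab
  push_neg at hab  -- b ≤ a
  have hsub : (Finset.univ.filter fun j : Fin g => (j : ℕ) < (b : ℕ) ∧ w j = 2)
      ⊆ (Finset.Iio k).image fun i => (oA i : Fin g) := by
    intro j hj
    simp only [Finset.mem_filter, Finset.mem_univ, true_and] at hj
    have hjA : j ∈ A := Finset.mem_filter.mpr ⟨Finset.mem_univ _, hj.2⟩
    set i := oA.symm ⟨j, hjA⟩ with hi
    have hoAi : (oA i : Fin g) = j := by rw [hi, oA.apply_symm_apply]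
    have hik : i < k := by
      have : (oA i : Fin g) < (oA k : Fin g) := by
        rw [hoAi]
        exact lt_of_lt_of_le (by exact_mod_cast hj.1) hab
      have h2 : oA i < oA k := Subtype.coe_lt_coe.mp this
      exact oA.lt_iff_lt.mp h2
    apply Finset.mem_image.mpr
    exact ⟨i, Finset.mem_Iio.mpr hik, hoAi⟩
  have hcard : cnt g w 2 (b : ℕ) ≤ (k : ℕ) := by
    calc cnt g w 2 (b : ℕ) ≤ ((Finset.Iio k).image fun i => (oA i : Fin g)).card :=
          Finset.card_le_card hsub
      _ ≤ (Finset.Iio k).card := Finset.card_image_le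
      _ = (k : ℕ) := Fin.card_Iio k
  omega

end Enum

lemma dyck_to_satisfies {g n : ℕ} (hn : g = 2 * n) {w : Fin g → ℕ}
    (hw : ∀ j, 1 ≤ w j ∧ w j ≤ 2) (hd : DyckCond g n w) :
    SatisfiesConds g 1 (n + 1) w := by
  have hcnt1 : cnt g w 1 g = n := by
    have := cnt_total hw
    rw [hd.2] at this
    omega
  have hA : (Finset.univ.filter fun j : Fin g => w j = 2).card = n := by
    rw [← hd.2]
    unfold cnt
    congr 1
    ext j
    simp [j.isLt]
  have hB : (Finset.univ.filter fun j : Fin g => w j = 1).card = n := by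
    rw [← hcnt1]
    unfold cnt
    congr 1
    ext j
    simp [j.isLt]
  have hns : ¬∃ js : Fin (n + 1) → Fin g, StrictMono js ∧ Monotone (w ∘ js) :=
    no_subseq hn hw hd
  refine ⟨?_, ?_, ?_⟩
  · -- CondI
    have hm : g + 1 - (n + 1) = n := by omega
    set oA := (Finset.univ.filter fun j : Fin g => w j = 2).orderIsoOfFin hA with hoA
    set oB := (Finset.univ.filter fun j : Fin g => w j = 1).orderIsoOfFin hB with hoB
    refine ⟨fun k => ![(oA (Fin.cast hm k) : Fin g), (oB (Fin.cast hm k) : Fin g)], ?_, ?_⟩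
    · intro k
      have hwa : w (oA (Fin.cast hm k) : Fin g) = 2 :=
        (Finset.mem_filter.mp (oA (Fin.cast hm k)).2).2
      have hwb : w (oB (Fin.cast hm k) : Fin g) = 1 :=
        (Finset.mem_filter.mp (oB (Fin.cast hm k)).2).2
      have hab := enum_lt hn hd hA hB (Fin.cast hm k)
      constructor
      · intro a b h
        have hv : (a : ℕ) < (b : ℕ) := h
        have hb2 : (b : ℕ) < 2 := b.isLt
        have ha : a = 0 := Fin.ext (by simp only [Fin.val_zero]; omega)
        have hb : b = 1 := Fin.ext (by simp only [Fin.val_one]; omega)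
        subst ha; subst hb
        simpa [hoA, hoB] using hab
      · intro a b h
        have hv : (a : ℕ) < (b : ℕ) := h
        have hb2 : (b : ℕ) < 2 := b.isLt
        have ha : a = 0 := Fin.ext (by simp only [Fin.val_zero]; omega)
        have hb : b = 1 := Fin.ext (by simp only [Fin.val_one]; omega)
        subst ha; subst hb
        simp only [Function.comp_apply, Matrix.cons_val_zero, Matrix.cons_val_one,
          Matrix.head_cons]
        omega
    · intro k k' hkk' a b h
      simp only at h
      have hva : (a : ℕ) < 2 := a.isLt
      have hvb : (b : ℕ) < 2 := b.isLt
      have key : ∀ c : Fin (1 + 1), ∀ k : Fin (g + 1 - (n + 1)),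
          (c = 0 → w (![(oA (Fin.cast hm k) : Fin g), (oB (Fin.cast hm k) : Fin g)] c) = 2) ∧
          (c = 1 → w (![(oA (Fin.cast hm k) : Fin g), (oB (Fin.cast hm k) : Fin g)] c) = 1) := by
        intro c k
        constructor
        · rintro rfl
          simpa using (Finset.mem_filter.mp (oA (Fin.cast hm k)).2).2
        · rintro rfl
          simpa using (Finset.mem_filter.mp (oB (Fin.cast hm k)).2).2
      by_cases ha : a = 0 <;> by_cases hb : b = 0
      · subst ha; subst hb
        simp only [Matrix.cons_val_zero] at h
        exact hkk' (Fin.cast_injective hm (oA.injective (Subtype.coe_injective h)))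
      · have hb1 : b = 1 := Fin.ext (by
          simp only [Fin.val_one]
          have : (b : ℕ) ≠ 0 := fun hc => hb (Fin.ext (by simpa using hc))
          omega)
        have e1 := (key a k).1 ha
        have e2 := (key b k').2 hb1
        rw [h] at e1
        omega
      · have ha1 : a = 1 := Fin.ext (by
          simp only [Fin.val_one]
          have : (a : ℕ) ≠ 0 := fun hc => ha (Fin.ext (by simpa using hc))
          omega)
        have e1 := (key a k).2 ha1
        have e2 := (key b k').1 hb
        rw [h] at e1
        omega
      · have ha1 : a = 1 := Fin.ext (by
          simp only [Fin.val_one]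
          have : (a : ℕ) ≠ 0 := fun hc => ha (Fin.ext (by simpa using hc))
          omega)
        have hb1 : b = 1 := Fin.ext (by
          simp only [Fin.val_one]
          have : (b : ℕ) ≠ 0 := fun hc => hb (Fin.ext (by simpa using hc))
          omega)
        subst ha1; subst hb1
        simp only [Matrix.cons_val_one, Matrix.head_cons] at h
        exact hkk' (Fin.cast_injective hm (oB.injective (Subtype.coe_injective h)))
  · -- CondII
    intro m hm'
    rw [Nat.div_one] at hm'
    rintro ⟨js, h1, h2⟩
    exact hns ⟨js ∘ Fin.castLE (by omega), h1.comp (Fin.strictMono_castLE _),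
      h2.comp (Fin.strictMono_castLE _).monotone⟩
  · -- CondIII
    intro i hi1 hi2
    rintro ⟨js, h1, h2, -⟩
    have hcast : StrictMono (Fin.cast (Nat.div_one (n + 1)).symm : Fin (n + 1) → Fin ((n + 1) / 1)) :=
      fun _ _ hxy => hxy
    exact hns ⟨js ∘ Fin.cast (Nat.div_one (n + 1)).symm, h1.comp hcast, h2.comp hcast.monotone⟩


/-- The Dyck word associated to a word satisfying the conditions. -/
noncomputable def toDW {g n : ℕ} (hn : g = 2 * n) (w : Fin g → ℕ)
    (hw : ∀ j, 1 ≤ w j ∧ w j ≤ 2) (hd : DyckCond g n w) : DyckWord where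
  toList := List.ofFn fun j => if w j = 2 then U else D
  count_U_eq_count_D := by
    have hlen : (List.ofFn fun j => if w j = 2 then U else D).length = g := by simp
    have hU : (List.ofFn fun j => if w j = 2 then U else D).count U = cnt g w 2 g := by
      conv_lhs => rw [← List.take_of_length_le (le_of_eq hlen)]
      exact count_U_take w le_rfl
    have hD : (List.ofFn fun j => if w j = 2 then U else D).count D = cnt g w 1 g := by
      conv_lhs => rw [← List.take_of_length_le (le_of_eq hlen)]
      exact count_D_take w hw le_rfl
    rw [hU, hD, hd.2]
    have := cnt_total hw
    have h2' := hd.2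
    omega
  count_D_le_count_U i := by
    have hlen : (List.ofFn fun j => if w j = 2 then U else D).length = g := by simp
    rcases le_or_gt i g with hi | hi
    · rw [count_U_take w hi, count_D_take w hw hi]
      exact hd.1 i hi
    · rw [List.take_of_length_le (by omega)]
      have hU : (List.ofFn fun j => if w j = 2 then U else D).count U = cnt g w 2 g := by
        conv_lhs => rw [← List.take_of_length_le (le_of_eq hlen)]
        exact count_U_take w le_rfl
      have hD : (List.ofFn fun j => if w j = 2 then U else D).count D = cnt g w 1 g := by
        conv_lhs => rw [← List.take_of_length_le (le_of_eq hlen)]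
        exact count_D_take w hw le_rfl
      rw [hU, hD, hd.2]
      have := cnt_total hw
      have h2' := hd.2
      omega

lemma toDW_semilength {g n : ℕ} (hn : g = 2 * n) (w : Fin g → ℕ)
    (hw : ∀ j, 1 ≤ w j ∧ w j ≤ 2) (hd : DyckCond g n w) :
    (toDW hn w hw hd).semilength = n := by
  show (List.ofFn fun j => if w j = 2 then U else D).count U = n
  have hlen : (List.ofFn fun j => if w j = 2 then U else D).length = g := by simp
  have hU : (List.ofFn fun j => if w j = 2 then U else D).count U = cnt g w 2 g := by
    conv_lhs => rw [← List.take_of_length_le (le_of_eq hlen)]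
    exact count_U_take w le_rfl
  rw [hU, hd.2]

noncomputable def ofDW (g : ℕ) (p : DyckWord) : Fin g → ℕ :=
  fun j => if p.toList.getD j D = U then 2 else 1

lemma ofDW_word (g : ℕ) (p : DyckWord) : ∀ j, 1 ≤ ofDW g p j ∧ ofDW g p j ≤ 2 := by
  intro j
  unfold ofDW
  split <;> omega

lemma ofDW_list {g n : ℕ} (hn : g = 2 * n) (p : DyckWord) (hp : p.semilength = n) :
    (List.ofFn fun j => if ofDW g p j = 2 then U else D) = p.toList := by
  have hlen : p.toList.length = g := by
    have := p.two_mul_semilength_eq_length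
    rw [hp] at this
    omega
  apply List.ext_getElem (by simp [hlen])
  intro i h1 h2
  rw [List.getElem_ofFn]
  unfold ofDW
  rw [List.getD_eq_getElem _ _ (by omega)]
  rcases (p.toList[i]).dichotomy with h | h <;> simp [h]

lemma ofDW_dyck {g n : ℕ} (hn : g = 2 * n) (p : DyckWord) (hp : p.semilength = n) :
    DyckCond g n (ofDW g p) := by
  have hlist := ofDW_list hn p hp
  have hlen : p.toList.length = g := by
    have := p.two_mul_semilength_eq_length
    rw [hp] at this
    omega
  constructor
  · intro k hk
    have h1 := count_U_take (ofDW g p) (k := k) hk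
    have h2 := count_D_take (ofDW g p) (ofDW_word g p) (k := k) hk
    rw [hlist] at h1 h2
    rw [← h1, ← h2]
    exact p.count_D_le_count_U k
  · have h1 := count_U_take (ofDW g p) (k := g) le_rfl
    rw [hlist, List.take_of_length_le (le_of_eq hlen)] at h1
    rw [← h1]
    exact hp

lemma ofDW_toDW {g n : ℕ} (hn : g = 2 * n) (w : Fin g → ℕ)
    (hw : ∀ j, 1 ≤ w j ∧ w j ≤ 2) (hd : DyckCond g n w) :
    ofDW g (toDW hn w hw hd) = w := by
  funext j
  show (if (List.ofFn fun j => if w j = 2 then U else D).getD j D = U then 2 else 1) = w j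
  rw [List.getD_eq_getElem _ _ (by simpa using j.isLt)]
  rw [List.getElem_ofFn]
  have := hw j
  by_cases h : w j = 2 <;> simp [h]
  omega

lemma mem_iff {g n : ℕ} (hn : g = 2 * n) (w : Fin g → ℕ) :
    (w ∈ (Fintype.piFinset fun _ : Fin g => Finset.Icc 1 (1 + 1)).filter
        fun w => SatisfiesConds g 1 (n + 1) w) ↔
      ((∀ j, 1 ≤ w j ∧ w j ≤ 2) ∧ DyckCond g n w) := by
  rw [Finset.mem_filter, Fintype.mem_piFinset]
  constructor
  · rintro ⟨h1, h2⟩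
    have hw : ∀ j, 1 ≤ w j ∧ w j ≤ 2 := fun j => by
      have := Finset.mem_Icc.mp (h1 j)
      omega
    exact ⟨hw, satisfies_to_dyck hn hw h2⟩
  · rintro ⟨h1, h2⟩
    exact ⟨fun j => Finset.mem_Icc.mpr (h1 j), dyck_to_satisfies hn h1 h2⟩

theorem catalan_count_aux (g : ℕ) (hg : Even g) :
    wordCount g 1 (g / 2 + 1) = catalan (g / 2) ∧
      (g / 2 + 1) * catalan (g / 2) = g.choose (g / 2) := by
  obtain ⟨n, hn'⟩ := hg
  have hn : g = 2 * n := by omega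
  have hg2 : g / 2 = n := by omega
  rw [hg2]
  constructor
  · rw [← DyckWord.card_dyckWord_semilength_eq_catalan, wordCount, ← Fintype.card_coe]
    apply Fintype.card_congr
    exact
      { toFun := fun x =>
          ⟨toDW hn x.1 ((mem_iff hn x.1).mp x.2).1 ((mem_iff hn x.1).mp x.2).2,
            toDW_semilength hn x.1 ((mem_iff hn x.1).mp x.2).1 ((mem_iff hn x.1).mp x.2).2⟩
        invFun := fun p =>
          ⟨ofDW g p.1, (mem_iff hn _).mpr ⟨ofDW_word g p.1, ofDW_dyck hn p.1 p.2⟩⟩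
        left_inv := fun x => Subtype.ext (ofDW_toDW hn x.1 ((mem_iff hn x.1).mp x.2).1 ((mem_iff hn x.1).mp x.2).2)
        right_inv := fun p => Subtype.ext (DyckWord.ext (ofDW_list hn p.1 p.2)) }
  · rw [succ_mul_catalan_eq_centralBinom, Nat.centralBinom, hn]


end DyckAux

/-- For `g` even and `d = g/2 + 1`, the number of binary words of
length `g` satisfying conditions (i)–(iii) for parameters `(g,1,d)` equals the Catalan
number `C_{g/2} = (1/(g/2 + 1)) · binom(g, g/2)`. -/
theorem catalan_count (g : ℕ) (hg : Even g) :
    wordCount g 1 (g / 2 + 1) = catalan (g / 2) ∧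
      (g / 2 + 1) * catalan (g / 2) = g.choose (g / 2) := DyckAux.catalan_count_aux g hg
end
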